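/- Elimination of bad patterns by repeated inflation: let Q be a polyomino, let R(Q) = max over pairs of cells (x,y), (x',y') ∈ Q of max(|x − x'|, |y − y'|), and let I^k denote the k-fold iterate of the inflation map (I⁰(Q) = Q, I^{k+1}(Q) = I(I^k(Q))). Then for every k > R(Q), the polyomino I^k(Q) satisfies: (i) its complement (ℤ × ℤ) \ I^k(Q) is connected under the lattice adjacency (no holes); (ii) no cell c ∈ I^k(Q) has its set of adjacent cells belonging to I^k(Q) equal to exactly {c + (1,0), c − (1,0)} or exactly {c + (0,1), c − (0,1)} (no pattern-(d) cells); and (iii) no cell c ∉ I^k(Q) has its set of adjacent cells belonging to I^k(Q) equal to exactly {c + (1,0), c − (1,0)} or exactly {c + (0,1), c − (0,1)} (no pattern-(z) cells). -/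

import Mathlib

/-- A cell of the square lattice. -/
abbrev Cell : Type := ℤ × ℤ

/-- Two cells `(x,y)` and `(x',y')` are adjacent iff `|x − x'| + |y − y'| = 1`. -/
def Adj (c d : Cell) : Prop := (c.1 - d.1).natAbs + (c.2 - d.2).natAbs = 1

/-- A set of cells is connected under the lattice adjacency: any two of its cells are
joined by a path of pairwise-adjacent cells lying in the set. -/
def ConnectedIn (S : Set Cell) : Prop :=
  ∀ c ∈ S, ∀ d ∈ S, Relation.ReflTransGen (fun a b => a ∈ S ∧ b ∈ S ∧ Adj a b) c d

/-- A polyomino is a finite nonempty connected set of cells. -/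
def IsPolyomino (Q : Set Cell) : Prop := Q.Finite ∧ Q.Nonempty ∧ ConnectedIn Q

/-- The perimeter of `Q`: cells not in `Q` adjacent to at least one cell of `Q`. -/
def perim (Q : Set Cell) : Set Cell := {c | c ∉ Q ∧ ∃ d ∈ Q, Adj c d}

/-- The border of `Q`: cells of `Q` adjacent to at least one cell not in `Q`. -/
def border (Q : Set Cell) : Set Cell := {c | c ∈ Q ∧ ∃ d, d ∉ Q ∧ Adj c d}

/-- `eps n` is the minimum possible perimeter size of a polyomino with `n` cells. -/
noncomputable def eps (n : ℕ) : ℕ :=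
  sInf {p | ∃ Q : Set Cell, IsPolyomino Q ∧ Q.ncard = n ∧ (perim Q).ncard = p}

/-- A minimal-perimeter polyomino: a polyomino whose perimeter size equals
the minimum possible for its size. -/
def IsMinPerim (Q : Set Cell) : Prop := IsPolyomino Q ∧ (perim Q).ncard = eps Q.ncard

/-- The inflation of `Q`. -/
def inflate (Q : Set Cell) : Set Cell := Q ∪ perim Q

/-- The deflation of `Q`. -/
def deflate (Q : Set Cell) : Set Cell := Q \ border Q
/-- L1 distance between cells. -/
def D1 (c d : Cell) : ℕ := (c.1 - d.1).natAbs + (c.2 - d.2).natAbs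

lemma D1_mk (x y : ℤ) (q : Cell) :
    D1 (x, y) q = (x - q.1).natAbs + (y - q.2).natAbs := rfl

lemma adj_symm' {c d : Cell} (h : Adj c d) : Adj d c := by
  unfold Adj at *; omega

lemma rel_symm (T : Set Cell) :
    Symmetric (fun a b : Cell => a ∈ T ∧ b ∈ T ∧ Adj a b) :=
  fun _ _ h => ⟨h.2.1, h.1, adj_symm' h.2.2⟩

lemma step_toward (c q : Cell) (n : ℕ) (h : D1 c q = n + 1) :
    ∃ c' : Cell, Adj c c' ∧ D1 c' q = n := by
  unfold D1 at *
  rcases lt_trichotomy c.1 q.1 with h1 | h1 | h1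
  · exact ⟨(c.1 + 1, c.2), by unfold Adj; simp; try omega, by simp; try omega⟩
  · rcases lt_trichotomy c.2 q.2 with h2 | h2 | h2
    · exact ⟨(c.1, c.2 + 1), by unfold Adj; simp; try omega, by simp; try omega⟩
    · omega
    · exact ⟨(c.1, c.2 - 1), by unfold Adj; simp; try omega, by simp; try omega⟩
  · exact ⟨(c.1 - 1, c.2), by unfold Adj; simp; try omega, by simp; try omega⟩

lemma mem_iterate_inflate (Q : Set Cell) :
    ∀ (k : ℕ) (c : Cell), c ∈ inflate^[k] Q ↔ ∃ q ∈ Q, D1 c q ≤ k := by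
  intro k
  induction k with
  | zero =>
    intro c
    simp only [Function.iterate_zero, id_eq]
    constructor
    · intro hc; exact ⟨c, hc, by unfold D1; omega⟩
    · rintro ⟨q, hq, hd⟩
      have : c = q := by
        unfold D1 at hd
        have h1 : c.1 = q.1 := by omega
        have h2 : c.2 = q.2 := by omega
        exact Prod.ext h1 h2
      rwa [this]
  | succ n ih =>
    intro c
    rw [Function.iterate_succ_apply']
    constructor
    · rintro (hc | hc)
      · obtain ⟨q, hq, hd⟩ := (ih c).mp hc
        exact ⟨q, hq, by omega⟩
      · obtain ⟨hcn, d, hd, hadj⟩ := hc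
        obtain ⟨q, hq, hdq⟩ := (ih d).mp hd
        refine ⟨q, hq, ?_⟩
        have : D1 c q ≤ D1 c d + D1 d q := by unfold D1; omega
        have hcd : D1 c d = 1 := hadj
        omega
    · rintro ⟨q, hq, hd⟩
      by_cases hc : c ∈ inflate^[n] Q
      · exact Or.inl hc
      · right
        have hnot : ∀ q' ∈ Q, ¬ D1 c q' ≤ n := by
          intro q' hq' hle
          exact hc ((ih c).mpr ⟨q', hq', hle⟩)
        have hdn : D1 c q = n + 1 := by have := hnot q hq; omega
        obtain ⟨c', hadj, hdc'⟩ := step_toward c q n hdn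
        exact ⟨hc, c', (ih c').mpr ⟨q, hq, le_of_eq hdc'⟩, hadj⟩

lemma walk_right (T : Set Cell) (y : ℤ) :
    ∀ (n : ℕ) (x : ℤ), (∀ i : ℕ, i ≤ n → ((x + i, y) : Cell) ∈ T) →
      Relation.ReflTransGen (fun a b : Cell => a ∈ T ∧ b ∈ T ∧ Adj a b) (x, y) (x + n, y) := by
  intro n
  induction n with
  | zero => intro x _; simpa using Relation.ReflTransGen.refl
  | succ m ih =>
    intro x h
    have tail : Relation.ReflTransGen (fun a b : Cell => a ∈ T ∧ b ∈ T ∧ Adj a b)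
        (x, y) (x + m, y) := ih x (fun i hi => h i (by omega))
    refine tail.tail ⟨h m (by omega), ?_, ?_⟩
    · have := h (m + 1) le_rfl
      simpa [add_assoc] using this
    · unfold Adj; simp; try omega

lemma walk_up (T : Set Cell) (x : ℤ) :
    ∀ (n : ℕ) (y : ℤ), (∀ i : ℕ, i ≤ n → ((x, y + i) : Cell) ∈ T) →
      Relation.ReflTransGen (fun a b : Cell => a ∈ T ∧ b ∈ T ∧ Adj a b) (x, y) (x, y + n) := by
  intro n
  induction n with
  | zero => intro y _; simpa using Relation.ReflTransGen.refl
  | succ m ih =>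
    intro y h
    have tail := ih y (fun i hi => h i (by omega))
    refine tail.tail ⟨h m (by omega), ?_, ?_⟩
    · have := h (m + 1) le_rfl
      simpa [add_assoc] using this
    · unfold Adj; simp; try omega

lemma walkx (T : Set Cell) (x₁ x₂ y : ℤ)
    (h : ∀ t : ℤ, min x₁ x₂ ≤ t → t ≤ max x₁ x₂ → ((t, y) : Cell) ∈ T) :
    Relation.ReflTransGen (fun a b : Cell => a ∈ T ∧ b ∈ T ∧ Adj a b) (x₁, y) (x₂, y) := by
  rcases le_total x₁ x₂ with hle | hle
  · have := walk_right T y (x₂ - x₁).toNat x₁ (fun i hi => h _ (by omega) (by omega))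
    have hx : x₁ + ((x₂ - x₁).toNat : ℤ) = x₂ := by omega
    rwa [hx] at this
  · have := walk_right T y (x₁ - x₂).toNat x₂ (fun i hi => h _ (by omega) (by omega))
    have hx : x₂ + ((x₁ - x₂).toNat : ℤ) = x₁ := by omega
    rw [hx] at this
    exact (haveI hs : Std.Symm (fun a b : Cell => a ∈ T ∧ b ∈ T ∧ Adj a b) := ⟨fun _ _ h => rel_symm T h⟩; Relation.ReflTransGen.stdSymm.symm _ _) this

lemma walky (T : Set Cell) (x y₁ y₂ : ℤ)
    (h : ∀ t : ℤ, min y₁ y₂ ≤ t → t ≤ max y₁ y₂ → ((x, t) : Cell) ∈ T) :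
    Relation.ReflTransGen (fun a b : Cell => a ∈ T ∧ b ∈ T ∧ Adj a b) (x, y₁) (x, y₂) := by
  rcases le_total y₁ y₂ with hle | hle
  · have := walk_up T x (y₂ - y₁).toNat y₁ (fun i hi => h _ (by omega) (by omega))
    have hy : y₁ + ((y₂ - y₁).toNat : ℤ) = y₂ := by omega
    rwa [hy] at this
  · have := walk_up T x (y₁ - y₂).toNat y₂ (fun i hi => h _ (by omega) (by omega))
    have hy : y₂ + ((y₁ - y₂).toNat : ℤ) = y₁ := by omega
    rw [hy] at this
    exact (haveI hs : Std.Symm (fun a b : Cell => a ∈ T ∧ b ∈ T ∧ Adj a b) := ⟨fun _ _ h => rel_symm T h⟩; Relation.ReflTransGen.stdSymm.symm _ _) this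

lemma no_pattern_h (Q : Set Cell) (k : ℕ)
    (hk : ∀ c ∈ Q, ∀ d ∈ Q, max (c.1 - d.1).natAbs (c.2 - d.2).natAbs < k)
    (c : Cell)
    (h1 : ∃ q ∈ Q, D1 (c.1 + 1, c.2) q ≤ k)
    (h2 : ∃ q ∈ Q, D1 (c.1 - 1, c.2) q ≤ k)
    (h3 : ∀ q ∈ Q, ¬ D1 (c.1, c.2 + 1) q ≤ k)
    (h4 : ∀ q ∈ Q, ¬ D1 (c.1, c.2 - 1) q ≤ k) : False := by
  obtain ⟨q, hq, hd1⟩ := h1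
  obtain ⟨q', hq', hd2⟩ := h2
  have e3 := h3 q hq
  have e4 := h4 q hq
  have e3' := h3 q' hq'
  have e4' := h4 q' hq'
  have hch : (q.1 - q'.1).natAbs < k := lt_of_le_of_lt (le_max_left _ _) (hk q hq q' hq')
  unfold D1 at *
  simp only at *
  omega

lemma no_pattern_v (Q : Set Cell) (k : ℕ)
    (hk : ∀ c ∈ Q, ∀ d ∈ Q, max (c.1 - d.1).natAbs (c.2 - d.2).natAbs < k)
    (c : Cell)
    (h1 : ∃ q ∈ Q, D1 (c.1, c.2 + 1) q ≤ k)
    (h2 : ∃ q ∈ Q, D1 (c.1, c.2 - 1) q ≤ k)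
    (h3 : ∀ q ∈ Q, ¬ D1 (c.1 + 1, c.2) q ≤ k)
    (h4 : ∀ q ∈ Q, ¬ D1 (c.1 - 1, c.2) q ≤ k) : False := by
  obtain ⟨q, hq, hd1⟩ := h1
  obtain ⟨q', hq', hd2⟩ := h2
  have e3 := h3 q hq
  have e4 := h4 q hq
  have e3' := h3 q' hq'
  have e4' := h4 q' hq'
  have hch : (q.2 - q'.2).natAbs < k := lt_of_le_of_lt (le_max_right _ _) (hk q hq q' hq')
  unfold D1 at *
  simp only at *
  omega

lemma exists_x_eq (Q : Set Cell) {a b : Cell}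
    (h : Relation.ReflTransGen (fun a b : Cell => a ∈ Q ∧ b ∈ Q ∧ Adj a b) a b)
    (haQ : a ∈ Q) :
    ∀ X : ℤ, a.1 ≤ X → X ≤ b.1 → ∃ q ∈ Q, q.1 = X := by
  induction h with
  | refl => intro X h1 h2; exact ⟨a, haQ, by omega⟩
  | @tail b' b'' hab step ih =>
    intro X h1 h2
    by_cases hc : X ≤ b'.1
    · exact ih X h1 hc
    · have hadj : (b'.1 - b''.1).natAbs + (b'.2 - b''.2).natAbs = 1 := step.2.2
      exact ⟨b'', step.2.1, by omega⟩

lemma exists_y_eq (Q : Set Cell) {a b : Cell}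
    (h : Relation.ReflTransGen (fun a b : Cell => a ∈ Q ∧ b ∈ Q ∧ Adj a b) a b)
    (haQ : a ∈ Q) :
    ∀ Y : ℤ, a.2 ≤ Y → Y ≤ b.2 → ∃ q ∈ Q, q.2 = Y := by
  induction h with
  | refl => intro Y h1 h2; exact ⟨a, haQ, by omega⟩
  | @tail b' b'' hab step ih =>
    intro Y h1 h2
    by_cases hc : Y ≤ b'.2
    · exact ih Y h1 hc
    · have hadj : (b'.1 - b''.1).natAbs + (b'.2 - b''.2).natAbs = 1 := step.2.2
      exact ⟨b'', step.2.1, by omega⟩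
/-- elimination of bad patterns by repeated inflation: let `Q` be a
polyomino and let `k` exceed the diameter `R(Q) = max over pairs of cells of
`max(|x − x'|, |y − y'|)`. Then `I^k(Q)` has (i) a connected complement (no holes);
(ii) no pattern-(d) cells; and (iii) no pattern-(z) cells. -/
theorem inflation_eliminates_patterns (Q : Set Cell) (hQ : IsPolyomino Q) (k : ℕ)
    (hk : ∀ c ∈ Q, ∀ d ∈ Q, max (c.1 - d.1).natAbs (c.2 - d.2).natAbs < k) :
    ConnectedIn (inflate^[k] Q)ᶜ ∧
    (∀ c ∈ inflate^[k] Q,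
      {d | Adj c d ∧ d ∈ inflate^[k] Q} ≠ ({(c.1 + 1, c.2), (c.1 - 1, c.2)} : Set Cell) ∧
      {d | Adj c d ∧ d ∈ inflate^[k] Q} ≠ ({(c.1, c.2 + 1), (c.1, c.2 - 1)} : Set Cell)) ∧
    (∀ c ∉ inflate^[k] Q,
      {d | Adj c d ∧ d ∈ inflate^[k] Q} ≠ ({(c.1 + 1, c.2), (c.1 - 1, c.2)} : Set Cell) ∧
      {d | Adj c d ∧ d ∈ inflate^[k] Q} ≠ ({(c.1, c.2 + 1), (c.1, c.2 - 1)} : Set Cell)) := by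
  obtain ⟨hfin, ⟨q₀, hq₀⟩, hconn⟩ := hQ
  have hmem := mem_iterate_inflate Q k
  -- the pattern parts (ii) and (iii): they do not depend on whether c is in the set
  have main2 : ∀ c : Cell,
      {d | Adj c d ∧ d ∈ inflate^[k] Q} ≠ ({(c.1 + 1, c.2), (c.1 - 1, c.2)} : Set Cell) ∧
      {d | Adj c d ∧ d ∈ inflate^[k] Q} ≠ ({(c.1, c.2 + 1), (c.1, c.2 - 1)} : Set Cell) := by
    intro c
    constructor
    · intro heq
      have m1 : ((c.1 + 1, c.2) : Cell) ∈ {d | Adj c d ∧ d ∈ inflate^[k] Q} := by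
        rw [heq]; exact Set.mem_insert _ _
      have m2 : ((c.1 - 1, c.2) : Cell) ∈ {d | Adj c d ∧ d ∈ inflate^[k] Q} := by
        rw [heq]; exact Set.mem_insert_of_mem _ rfl
      have m3 : ((c.1, c.2 + 1) : Cell) ∉ {d | Adj c d ∧ d ∈ inflate^[k] Q} := by
        rw [heq]; intro hm
        simp only [Set.mem_insert_iff, Set.mem_singleton_iff, Prod.mk.injEq] at hm
        omega
      have m4 : ((c.1, c.2 - 1) : Cell) ∉ {d | Adj c d ∧ d ∈ inflate^[k] Q} := by
        rw [heq]; intro hm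
        simp only [Set.mem_insert_iff, Set.mem_singleton_iff, Prod.mk.injEq] at hm
        omega
      refine no_pattern_h Q k hk c ((hmem _).mp m1.2 |> fun h => h) ((hmem _).mp m2.2) ?_ ?_
      · intro q hq hle
        exact m3 ⟨by unfold Adj; simp, (hmem _).mpr ⟨q, hq, hle⟩⟩
      · intro q hq hle
        exact m4 ⟨by unfold Adj; simp, (hmem _).mpr ⟨q, hq, hle⟩⟩
    · intro heq
      have m1 : ((c.1, c.2 + 1) : Cell) ∈ {d | Adj c d ∧ d ∈ inflate^[k] Q} := by
        rw [heq]; exact Set.mem_insert _ _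
      have m2 : ((c.1, c.2 - 1) : Cell) ∈ {d | Adj c d ∧ d ∈ inflate^[k] Q} := by
        rw [heq]; exact Set.mem_insert_of_mem _ rfl
      have m3 : ((c.1 + 1, c.2) : Cell) ∉ {d | Adj c d ∧ d ∈ inflate^[k] Q} := by
        rw [heq]; intro hm
        simp only [Set.mem_insert_iff, Set.mem_singleton_iff, Prod.mk.injEq] at hm
        omega
      have m4 : ((c.1 - 1, c.2) : Cell) ∉ {d | Adj c d ∧ d ∈ inflate^[k] Q} := by
        rw [heq]; intro hm
        simp only [Set.mem_insert_iff, Set.mem_singleton_iff, Prod.mk.injEq] at hm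
        omega
      refine no_pattern_v Q k hk c ((hmem _).mp m1.2) ((hmem _).mp m2.2) ?_ ?_
      · intro q hq hle
        exact m3 ⟨by unfold Adj; simp, (hmem _).mpr ⟨q, hq, hle⟩⟩
      · intro q hq hle
        exact m4 ⟨by unfold Adj; simp, (hmem _).mpr ⟨q, hq, hle⟩⟩
  refine ⟨?_, fun c _ => main2 c, fun c _ => main2 c⟩
  -- part (i): the complement is connected
  have hO : ∀ c : Cell, (2 * k ≤ (c.1 - q₀.1).natAbs ∨ 2 * k ≤ (c.2 - q₀.2).natAbs) →
      c ∈ (inflate^[k] Q)ᶜ := by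
    intro c hc hcS
    obtain ⟨q, hq, hd⟩ := (hmem c).mp hcS
    have h1 : (q.1 - q₀.1).natAbs < k := lt_of_le_of_lt (le_max_left _ _) (hk q hq q₀ hq₀)
    have h2 : (q.2 - q₀.2).natAbs < k := lt_of_le_of_lt (le_max_right _ _) (hk q hq q₀ hq₀)
    unfold D1 at hd
    omega
  have reach : ∀ c : Cell, c ∈ (inflate^[k] Q)ᶜ →
      Relation.ReflTransGen
        (fun a b : Cell => a ∈ (inflate^[k] Q)ᶜ ∧ b ∈ (inflate^[k] Q)ᶜ ∧ Adj a b)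
        c ((q₀.1 + 2 * (k : ℤ), q₀.2 + 2 * (k : ℤ)) : Cell) := by
    intro c hc
    have hnotmem : ∀ q ∈ Q, ¬ D1 c q ≤ k := fun q hq h => hc ((hmem c).mpr ⟨q, hq, h⟩)
    by_cases hE : ∃ q ∈ Q, c.1 ≤ q.1
    · by_cases hW : ∃ q ∈ Q, q.1 ≤ c.1
      · by_cases hN : ∃ q ∈ Q, c.2 ≤ q.2
        · by_cases hSo : ∃ q ∈ Q, q.2 ≤ c.2
          · -- all four directions have cells of Q: contradiction with c ∉ S
            exfalso
            obtain ⟨qE, hqE, hE'⟩ := hE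
            obtain ⟨qW, hqW, hW'⟩ := hW
            obtain ⟨qN, hqN, hN'⟩ := hN
            obtain ⟨qS, hqS, hS'⟩ := hSo
            obtain ⟨q1, hq1, hq1x⟩ := exists_x_eq Q (hconn qW hqW qE hqE) hqW c.1 hW' hE'
            obtain ⟨q2, hq2, hq2y⟩ := exists_y_eq Q (hconn qS hqS qN hqN) hqS c.2 hS' hN'
            have hch : (q1.2 - q2.2).natAbs < k :=
              lt_of_le_of_lt (le_max_right _ _) (hk q1 hq1 q2 hq2)
            have hn := hnotmem q1 hq1
            unfold D1 at hn
            omega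
          · -- escape south
            push_neg at hSo
            have ray : ∀ t : ℤ, t ≤ c.2 → ((c.1, t) : Cell) ∈ (inflate^[k] Q)ᶜ := by
              intro t ht hmem'
              obtain ⟨q, hq, hd⟩ := (hmem _).mp hmem'
              rw [D1_mk] at hd
              have h1 := hnotmem q hq
              have h2 := hSo q hq
              unfold D1 at h1
              omega
            have leg1 := walky ((inflate^[k] Q)ᶜ) c.1 c.2 (min c.2 (q₀.2 - 2 * (k : ℤ)))
              (fun t h1 h2 => ray t (by omega))
            have leg2 := walkx ((inflate^[k] Q)ᶜ) c.1 (q₀.1 + 2 * (k : ℤ))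
              (min c.2 (q₀.2 - 2 * (k : ℤ)))
              (fun t h1 h2 => hO _ (Or.inr (by simp only; omega)))
            have leg3 := walky ((inflate^[k] Q)ᶜ) (q₀.1 + 2 * (k : ℤ))
              (min c.2 (q₀.2 - 2 * (k : ℤ))) (q₀.2 + 2 * (k : ℤ))
              (fun t h1 h2 => hO _ (Or.inl (by simp only; omega)))
            exact leg1.trans (leg2.trans leg3)
        · -- escape north
          push_neg at hN
          have ray : ∀ t : ℤ, c.2 ≤ t → ((c.1, t) : Cell) ∈ (inflate^[k] Q)ᶜ := by
            intro t ht hmem'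
            obtain ⟨q, hq, hd⟩ := (hmem _).mp hmem'
            rw [D1_mk] at hd
            have h1 := hnotmem q hq
            have h2 := hN q hq
            unfold D1 at h1
            omega
          have leg1 := walky ((inflate^[k] Q)ᶜ) c.1 c.2 (max c.2 (q₀.2 + 2 * (k : ℤ)))
            (fun t h1 h2 => ray t (by omega))
          have leg2 := walkx ((inflate^[k] Q)ᶜ) c.1 (q₀.1 + 2 * (k : ℤ))
            (max c.2 (q₀.2 + 2 * (k : ℤ)))
            (fun t h1 h2 => hO _ (Or.inr (by simp only; omega)))
          have leg3 := walky ((inflate^[k] Q)ᶜ) (q₀.1 + 2 * (k : ℤ))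
            (max c.2 (q₀.2 + 2 * (k : ℤ))) (q₀.2 + 2 * (k : ℤ))
            (fun t h1 h2 => hO _ (Or.inl (by simp only; omega)))
          exact leg1.trans (leg2.trans leg3)
      · -- escape west
        push_neg at hW
        have ray : ∀ t : ℤ, t ≤ c.1 → ((t, c.2) : Cell) ∈ (inflate^[k] Q)ᶜ := by
          intro t ht hmem'
          obtain ⟨q, hq, hd⟩ := (hmem _).mp hmem'
          rw [D1_mk] at hd
          have h1 := hnotmem q hq
          have h2 := hW q hq
          unfold D1 at h1
          omega
        have leg1 := walkx ((inflate^[k] Q)ᶜ) c.1 (min c.1 (q₀.1 - 2 * (k : ℤ))) c.2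
          (fun t h1 h2 => ray t (by omega))
        have leg2 := walky ((inflate^[k] Q)ᶜ) (min c.1 (q₀.1 - 2 * (k : ℤ))) c.2
          (q₀.2 + 2 * (k : ℤ))
          (fun t h1 h2 => hO _ (Or.inl (by simp only; omega)))
        have leg3 := walkx ((inflate^[k] Q)ᶜ) (min c.1 (q₀.1 - 2 * (k : ℤ)))
          (q₀.1 + 2 * (k : ℤ)) (q₀.2 + 2 * (k : ℤ))
          (fun t h1 h2 => hO _ (Or.inr (by simp only; omega)))
        exact leg1.trans (leg2.trans leg3)
    · -- escape east
      push_neg at hE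
      have ray : ∀ t : ℤ, c.1 ≤ t → ((t, c.2) : Cell) ∈ (inflate^[k] Q)ᶜ := by
        intro t ht hmem'
        obtain ⟨q, hq, hd⟩ := (hmem _).mp hmem'
        rw [D1_mk] at hd
        have h1 := hnotmem q hq
        have h2 := hE q hq
        unfold D1 at h1
        omega
      have leg1 := walkx ((inflate^[k] Q)ᶜ) c.1 (max c.1 (q₀.1 + 2 * (k : ℤ))) c.2
        (fun t h1 h2 => ray t (by omega))
      have leg2 := walky ((inflate^[k] Q)ᶜ) (max c.1 (q₀.1 + 2 * (k : ℤ))) c.2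
        (q₀.2 + 2 * (k : ℤ))
        (fun t h1 h2 => hO _ (Or.inl (by simp only; omega)))
      have leg3 := walkx ((inflate^[k] Q)ᶜ) (max c.1 (q₀.1 + 2 * (k : ℤ)))
        (q₀.1 + 2 * (k : ℤ)) (q₀.2 + 2 * (k : ℤ))
        (fun t h1 h2 => hO _ (Or.inr (by simp only; omega)))
      exact leg1.trans (leg2.trans leg3)
  intro c hc d hd
  exact (reach c hc).trans
    ((haveI hs : Std.Symm (fun a b : Cell => a ∈ ((inflate^[k] Q)ᶜ) ∧ b ∈ ((inflate^[k] Q)ᶜ) ∧ Adj a b) := ⟨fun _ _ h => rel_symm ((inflate^[k] Q)ᶜ) h⟩; Relation.ReflTransGen.stdSymm.symm _ _) (reach d hd))
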